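/- arXiv:2301.03218 — 9 statements merged into one kernel-verified Lean document; each statement's English description precedes it below -/
import Mathlib

section
/- Let M be a nonempty bounded subset of a Hilbert space H and t(x) = sup_{z ∈ M} ‖x - z‖. If x₁ ≠ x₂ are two points of H with t(x₁) = t(x₂) = m, then t((x₁+x₂)/2) < m. Consequently the function t has at most one point of global minimum (the Chebyshev center of M is unique). -/
/-! By the parallelogram law (Apollonius), a point of `M` within distance `m` of two points
`x₁ ≠ x₂` is within distance `√(m² - ‖x₁ - x₂‖² / 4) < m` of their midpoint. So the
farthest-point distance is strictly midpoint-convex, and two distinct minimizers would have a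
midpoint doing strictly better than both. -/

open EuclideanGeometry

noncomputable section

/-- Junk value `0` when `M` is empty or unbounded. -/
def farthestDist {X : Type*} [PseudoMetricSpace X] (M : Set X) (x : X) : ℝ :=
  ⨆ z : M, dist x z

section PseudoMetric

variable {X : Type*} [PseudoMetricSpace X] {M : Set X}

theorem dist_le_farthestDist (hMb : Bornology.IsBounded M) (x : X) {z : X} (hz : z ∈ M) :
    dist x z ≤ farthestDist M x := by
  obtain ⟨r, hr⟩ := (Metric.isBounded_iff_subset_closedBall x).1 hMb
  refine le_ciSup (f := fun z : M => dist x z) ⟨r, ?_⟩ ⟨z, hz⟩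
  rintro _ ⟨w, rfl⟩
  simpa only [Metric.mem_closedBall, dist_comm] using hr w.2

theorem farthestDist_le (hM : M.Nonempty) {x : X} {r : ℝ} (h : ∀ z ∈ M, dist x z ≤ r) :
    farthestDist M x ≤ r :=
  have := hM.to_subtype
  ciSup_le fun z => h z z.2

end PseudoMetric

section InnerProduct

variable {H : Type*} [NormedAddCommGroup H] [InnerProductSpace ℝ H] {M : Set H}

theorem dist_midpoint_le_sqrt {x₁ x₂ z : H} {r : ℝ} (h₁ : dist x₁ z ≤ r) (h₂ : dist x₂ z ≤ r) :
    dist (midpoint ℝ x₁ x₂) z ≤ √(r ^ 2 - (dist x₁ x₂ / 2) ^ 2) := by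
  have apollonius := dist_sq_add_dist_sq_eq_two_mul_dist_midpoint_sq_add_half_dist_sq z x₁ x₂
  rw [dist_comm z x₁, dist_comm z x₂, dist_comm z] at apollonius
  refine Real.le_sqrt_of_sq_le ?_
  linarith [pow_le_pow_left₀ dist_nonneg h₁ 2, pow_le_pow_left₀ dist_nonneg h₂ 2]

theorem farthestDist_midpoint_lt (hM : M.Nonempty) (hMb : Bornology.IsBounded M) {x₁ x₂ : H}
    (hne : x₁ ≠ x₂) (h : farthestDist M x₂ = farthestDist M x₁) :
    farthestDist M (midpoint ℝ x₁ x₂) < farthestDist M x₁ := by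
  set r := farthestDist M x₁
  have h₁ : ∀ z ∈ M, dist x₁ z ≤ r := fun z hz => dist_le_farthestDist hMb x₁ hz
  have h₂ : ∀ z ∈ M, dist x₂ z ≤ r := fun z hz => h ▸ dist_le_farthestDist hMb x₂ hz
  have hd : 0 < dist x₁ x₂ := dist_pos.2 hne
  have hr : 0 < r := by
    obtain ⟨z, hz⟩ := hM
    linarith [dist_triangle_right x₁ x₂ z, h₁ z hz, h₂ z hz]
  calc farthestDist M (midpoint ℝ x₁ x₂)
      ≤ √(r ^ 2 - (dist x₁ x₂ / 2) ^ 2) :=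
        farthestDist_le hM fun z hz => dist_midpoint_le_sqrt (h₁ z hz) (h₂ z hz)
    _ < r := (Real.sqrt_lt' hr).2 (sub_lt_self _ (by positivity))

theorem eq_of_forall_farthestDist_le (hM : M.Nonempty) (hMb : Bornology.IsBounded M)
    {y₁ y₂ : H} (hy₁ : ∀ x, farthestDist M y₁ ≤ farthestDist M x)
    (hy₂ : ∀ x, farthestDist M y₂ ≤ farthestDist M x) : y₁ = y₂ := by
  by_contra hne
  exact (farthestDist_midpoint_lt hM hMb hne (le_antisymm (hy₂ y₁) (hy₁ y₂))).not_ge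
    (hy₁ (midpoint ℝ y₁ y₂))

end InnerProduct

end

theorem chebyshev_center_unique_midpoint
    {H : Type*} [NormedAddCommGroup H] [InnerProductSpace ℝ H]
    (M : Set H) (hM : M.Nonempty) (hMb : Bornology.IsBounded M)
    (t : H → ℝ) (ht : ∀ x, t x = ⨆ z : M, ‖x - (z : H)‖)
    (x₁ x₂ : H) (m : ℝ) (hne : x₁ ≠ x₂) (h1 : t x₁ = m) (h2 : t x₂ = m) :
    t (midpoint ℝ x₁ x₂) < m ∧
      ∀ y₁ y₂ : H, (∀ x, t y₁ ≤ t x) → (∀ x, t y₂ ≤ t x) → y₁ = y₂ := by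
  obtain rfl : t = farthestDist M := funext fun x => by simp only [ht, farthestDist, dist_eq_norm]
  subst h1
  exact ⟨farthestDist_midpoint_lt hM hMb hne h2, fun _ _ => eq_of_forall_farthestDist_le hM hMb⟩
end

section
/- Let M be a nonempty convex bounded closed subset of a Hilbert space H and let t(x) = sup_{z ∈ M} ‖x - z‖. Then for any y ∈ H \ M there is a point z in the boundary of M such that t(z) ≤ t(y). Moreover, if H is finite-dimensional then one can choose z with t(z) < t(y). -/
/-!
Let `z` be the metric projection of `y` onto `M`. The open ball around `y` of radius
`d = ‖y - z‖ > 0` misses `M` while `z` lies on its boundary sphere, so `z ∈ frontier M`.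
The variational inequality `⟪y - z, w - z⟫ ≤ 0` for `w ∈ M` gives the Pythagorean estimate
`‖z - w‖² ≤ ‖y - w‖² - d² ≤ t(y)² - d²`, hence `t(z) ≤ √(t(y)² - d²) < t(y)`, in any Hilbert
space.
-/

open RealInnerProductSpace Metric

theorem mem_frontier_of_forall_norm_sub_le {E : Type*} [NormedAddCommGroup E] [NormedSpace ℝ E]
    {M : Set E} {y z : E} (hy : y ∉ M) (hz : z ∈ M) (hmin : ∀ w ∈ M, ‖y - z‖ ≤ ‖y - w‖) :
    z ∈ frontier M := by
  have hd : ‖y - z‖ ≠ 0 := norm_ne_zero_iff.mpr (sub_ne_zero.mpr fun h => hy (h ▸ hz))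
  have hball : ball y ‖y - z‖ ⊆ Mᶜ := fun w hw hwM => by
    rw [mem_ball, dist_eq_norm, norm_sub_rev] at hw
    exact (hmin w hwM).not_gt hw
  have hsphere : z ∈ closure (ball y ‖y - z‖) := by
    rw [closure_ball y hd, mem_closedBall, dist_eq_norm, norm_sub_rev]
  rw [frontier_eq_closure_inter_closure]
  exact ⟨subset_closure hz, closure_mono hball hsphere⟩

theorem Bornology.IsBounded.bddAbove_range_norm_sub {E : Type*} [SeminormedAddCommGroup E]
    {M : Set E} (hM : Bornology.IsBounded M) (x : E) :
    BddAbove (Set.range fun w : M => ‖x - (w : E)‖) := by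
  obtain ⟨C, hC⟩ := isBounded_iff_forall_norm_le.mp hM
  refine ⟨‖x‖ + C, ?_⟩
  rintro _ ⟨w, rfl⟩
  exact (norm_sub_le x w).trans (add_le_add_right (hC w w.2) _)

section InnerProductSpace

variable {H : Type*} [NormedAddCommGroup H] [InnerProductSpace ℝ H]

theorem norm_sub_sq_add_norm_sub_sq_le_of_inner_nonpos {y z w : H} (h : ⟪y - z, w - z⟫ ≤ 0) :
    ‖y - z‖ ^ 2 + ‖z - w‖ ^ 2 ≤ ‖y - w‖ ^ 2 := by
  have hsplit : y - w = (y - z) - (w - z) := by abel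
  rw [hsplit, norm_sub_sq_real (y - z), norm_sub_rev z w]
  linarith

/-- Moving a point to its projection onto `M` strictly decreases its farthest distance to `M`. -/
theorem iSup_norm_sub_lt_of_inner_nonpos {M : Set H} (hM : M.Nonempty)
    (hMb : Bornology.IsBounded M) {y z : H} (hyz : y ≠ z) (hz : z ∈ M)
    (hinner : ∀ w ∈ M, ⟪y - z, w - z⟫ ≤ 0) :
    ⨆ w : M, ‖z - (w : H)‖ < ⨆ w : M, ‖y - (w : H)‖ := by
  have : Nonempty M := hM.to_subtype
  set R := ⨆ w : M, ‖y - (w : H)‖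
  set d := ‖y - z‖
  have hle_R : ∀ w ∈ M, ‖y - w‖ ≤ R := fun w hw => le_ciSup (hMb.bddAbove_range_norm_sub y) ⟨w, hw⟩
  have hd : 0 < d := norm_pos_iff.mpr (sub_ne_zero.mpr hyz)
  have hR : 0 < R := hd.trans_le (hle_R z hz)
  have hbound : ∀ w ∈ M, ‖z - w‖ ≤ √(R ^ 2 - d ^ 2) := fun w hw => by
    have hpyth := norm_sub_sq_add_norm_sub_sq_le_of_inner_nonpos (hinner w hw)
    have hyw : ‖y - w‖ ^ 2 ≤ R ^ 2 := pow_le_pow_left₀ (norm_nonneg _) (hle_R w hw) 2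
    exact Real.le_sqrt_of_sq_le (by linarith)
  calc ⨆ w : M, ‖z - (w : H)‖ ≤ √(R ^ 2 - d ^ 2) := ciSup_le fun w => hbound w w.2
    _ < R := (Real.sqrt_lt' hR).mpr (by nlinarith)

end InnerProductSpace

theorem chebyshev_radius_boundary_point
    {H : Type*} [NormedAddCommGroup H] [InnerProductSpace ℝ H] [CompleteSpace H]
    (M : Set H) (hM : M.Nonempty) (hMconv : Convex ℝ M)
    (hMb : Bornology.IsBounded M) (hMcl : IsClosed M)
    (t : H → ℝ) (ht : ∀ x, t x = ⨆ z : M, ‖x - (z : H)‖)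
    (y : H) (hy : y ∉ M) :
    (∃ z ∈ frontier M, t z ≤ t y) ∧
      (FiniteDimensional ℝ H → ∃ z ∈ frontier M, t z < t y) := by
  obtain ⟨z, hzM, hz⟩ := exists_norm_eq_iInf_of_complete_convex hM hMcl.isComplete hMconv y
  have hinner : ∀ w ∈ M, ⟪y - z, w - z⟫ ≤ 0 :=
    (norm_eq_iInf_iff_real_inner_le_zero hMconv hzM).mp hz
  have hmin : ∀ w ∈ M, ‖y - z‖ ≤ ‖y - w‖ := fun w hw =>
    hz ▸ ciInf_le ⟨0, by rintro _ ⟨_, rfl⟩; exact norm_nonneg _⟩ (⟨w, hw⟩ : M)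
  have hfr : z ∈ frontier M := mem_frontier_of_forall_norm_sub_le hy hzM hmin
  have hlt : t z < t y := by
    rw [ht, ht]
    exact iSup_norm_sub_lt_of_inner_nonpos hM hMb (fun h => hy (h ▸ hzM)) hzM hinner
  exact ⟨⟨z, hfr, hlt.le⟩, fun _ => ⟨z, hfr, hlt⟩⟩
end

section
/- Let M₁ ⊆ M₂ be convex bounded closed subsets of a Hilbert space H, with boundaries Γ₁ = bd(M₁) and Γ₂ = bd(M₂). Then the self Chebyshev radius of Γ₁ is at most the self Chebyshev radius of Γ₂, i.e. δ(Γ₁) ≤ δ(Γ₂). -/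
/-!
Fix `x₂ ∈ Γ₂`. If `x₂ ∈ M₁` it already lies on `Γ₁`. Otherwise let `p ∈ M₁` be an approximately
nearest point to `x₂`: by the obtuse-angle inequality of inner product spaces, every point of `M₁`
is, up to `ε`, at least as close to `p` as to `x₂`, and by convexity of the distance the same holds
for the point `x₁ ∈ Γ₁` where the segment `[p, x₂]` leaves `M₁`. On the other hand, pushing a
point of `M₂` away from `x₂` along the ray from `x₂` until it reaches `Γ₂` only increases its
distance to `x₂`. So the largest distance from `x₁` to `Γ₁` is at most `ε` more than the largest
distance from `x₂` to `Γ₂`.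
-/

open Set Metric AffineMap

noncomputable def selfChebyshevRadius {X : Type*} [PseudoMetricSpace X] (Γ : Set X) : ℝ :=
  ⨅ x : Γ, ⨆ y : Γ, dist (x : X) (y : X)

theorem selfChebyshevRadius_le_of_forall_exists {X : Type*} [PseudoMetricSpace X]
    {Γ₁ Γ₂ : Set X} (hne : Γ₂.Nonempty) (hb : Bornology.IsBounded Γ₂)
    (h : ∀ x₂ ∈ Γ₂, ∀ ε > 0, ∃ x₁ ∈ Γ₁, ∀ y₁ ∈ Γ₁, ∃ y₂ ∈ Γ₂, dist x₁ y₁ ≤ dist x₂ y₂ + ε) :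
    selfChebyshevRadius Γ₁ ≤ selfChebyshevRadius Γ₂ := by
  have : Nonempty Γ₂ := hne.to_subtype
  refine le_ciInf fun x₂ => le_of_forall_pos_le_add fun ε hε => ?_
  obtain ⟨x₁, hx₁, hclose⟩ := h x₂ x₂.2 ε hε
  have : Nonempty Γ₁ := ⟨⟨x₁, hx₁⟩⟩
  have hbdd : BddAbove (range fun y : Γ₂ => dist (x₂ : X) y) :=
    ⟨diam Γ₂, forall_mem_range.2 fun y => dist_le_diam_of_mem hb x₂.2 y.2⟩
  calc selfChebyshevRadius Γ₁ ≤ ⨆ y₁ : Γ₁, dist x₁ (y₁ : X) :=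
        ciInf_le ⟨0, forall_mem_range.2 fun _ => Real.iSup_nonneg fun _ => dist_nonneg⟩
          (⟨x₁, hx₁⟩ : Γ₁)
    _ ≤ (⨆ y₂ : Γ₂, dist (x₂ : X) y₂) + ε := ciSup_le fun y₁ => by
        obtain ⟨y₂, hy₂, hle⟩ := hclose y₁ y₁.2
        linarith [le_ciSup hbdd ⟨y₂, hy₂⟩]

theorem IsPreconnected.inter_frontier_nonempty {X : Type*} [TopologicalSpace X] {s t : Set X}
    (hs : IsPreconnected s) (hst : (s ∩ t).Nonempty) (hst' : (s \ t).Nonempty) :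
    (s ∩ frontier t).Nonempty := by
  by_contra h
  have hint : ∀ x ∈ s, x ∈ closure t → x ∈ interior t := fun x hxs hxc =>
    by_contra fun hxi => h ⟨x, hxs, hxc, hxi⟩
  obtain ⟨x, -, hxi, hxc⟩ := hs _ _ isOpen_interior isClosed_closure.isOpen_compl
    (fun x hxs => (em (x ∈ closure t)).imp (hint x hxs) id)
    (hst.imp fun x ⟨hxs, hxt⟩ => ⟨hxs, hint x hxs (subset_closure hxt)⟩)
    (hst'.imp fun x ⟨hxs, hxt⟩ => ⟨hxs, fun hxc => hxt (interior_subset (hint x hxs hxc))⟩)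
  exact hxc (subset_closure (interior_subset hxi))

theorem exists_mem_frontier_dist_le_dist {E : Type*} [NormedAddCommGroup E] [NormedSpace ℝ E]
    {M : Set E} (hM : Bornology.IsBounded M) {x y : E}
    (hx : x ∈ frontier M) (hy : y ∈ M) : ∃ z ∈ frontier M, dist x y ≤ dist x z := by
  rcases eq_or_ne x y with rfl | hxy
  · exact ⟨x, hx, le_rfl⟩
  obtain ⟨R, hR⟩ := hM.subset_closedBall x
  set T : ℝ := max 1 ((R + 1) / dist x y)
  have hT : 1 ≤ T := le_max_left _ _
  have hlong : R + 1 ≤ T * dist x y := (div_le_iff₀ (dist_pos.2 hxy)).1 (le_max_right _ _)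
  have hfar : lineMap x y T ∉ M := fun hb => by
    have hle := hR hb
    rw [mem_closedBall, dist_lineMap_left, Real.norm_of_nonneg (by linarith)] at hle
    linarith
  obtain ⟨z, hzseg, hzf⟩ :=
    (convex_segment y (lineMap x y T)).isPreconnected.inter_frontier_nonempty
      ⟨y, left_mem_segment ℝ _ _, hy⟩ ⟨_, right_mem_segment ℝ _ _, hfar⟩
  have hbtw : Wbtw ℝ x y (lineMap x y T) :=
    wbtw_iff_left_eq_or_right_mem_image_Ici.2 (.inr ⟨T, hT, rfl⟩)
  refine ⟨z, hzf, ?_⟩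
  have hsum := (hbtw.trans_right_left (mem_segment_iff_wbtw.1 hzseg)).dist_add_dist
  linarith [dist_nonneg (x := y) (y := z)]

theorem exists_mem_forall_sq_dist_le_add {X : Type*} [PseudoMetricSpace X] {M : Set X}
    (hM : M.Nonempty) (x : X) {η : ℝ} (hη : 0 < η) :
    ∃ p ∈ M, ∀ q ∈ M, dist x p ^ 2 ≤ dist x q ^ 2 + η := by
  have : infDist x M < √(infDist x M ^ 2 + η) :=
    (Real.lt_sqrt infDist_nonneg).2 (lt_add_of_pos_right _ hη)
  obtain ⟨p, hp, hlt⟩ := (infDist_lt_iff hM).1 this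
  refine ⟨p, hp, fun q hq => ?_⟩
  have hsq := (Real.lt_sqrt dist_nonneg).1 hlt
  nlinarith [infDist_le_dist_of_mem (x := x) hq, infDist_nonneg (x := x) (s := M)]

section InnerProductSpace

variable {H : Type*} [NormedAddCommGroup H] [InnerProductSpace ℝ H]

/-- Comparing `p` with `p + t • (y - p) ∈ M` gives an approximate obtuse-angle inequality. -/
theorem Convex.sq_dist_le_of_forall_sq_dist_le_add {M : Set H} (hM : Convex ℝ M) {x p : H}
    {η : ℝ} (hp : p ∈ M) (hnear : ∀ q ∈ M, dist x p ^ 2 ≤ dist x q ^ 2 + η) {y : H} (hy : y ∈ M)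
    {t : ℝ} (ht₀ : 0 < t) (ht₁ : t ≤ 1) :
    dist p y ^ 2 ≤ dist x y ^ 2 + η / t + t * dist p y ^ 2 := by
  have hq := hnear _ (hM.add_smul_sub_mem hp hy ⟨ht₀.le, ht₁⟩)
  have hxq : dist x (p + t • (y - p)) = ‖(x - p) - t • (y - p)‖ := by
    rw [dist_eq_norm]; congr 1; abel
  have hxy : dist x y = ‖(x - p) - (y - p)‖ := by
    rw [dist_eq_norm]; congr 1; abel
  rw [hxq, dist_eq_norm] at hq
  rw [hxy, dist_eq_norm']
  generalize x - p = u at hq ⊢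
  generalize y - p = v at hq ⊢
  rw [norm_sub_sq_real, inner_smul_right, norm_smul, mul_pow, Real.norm_eq_abs, sq_abs] at hq
  have hinner : 2 * inner ℝ u v ≤ t * ‖v‖ ^ 2 + η / t := by
    rw [← sub_le_iff_le_add', le_div_iff₀ ht₀]
    nlinarith
  rw [norm_sub_sq_real]
  linarith [sq_nonneg ‖u‖]

/-- `H` need not be complete, so the nearest point of `M` to `x` may not exist; an approximately
nearest one is used instead. -/
theorem Convex.exists_mem_forall_dist_le_add {M : Set H} (hM : Convex ℝ M) (hne : M.Nonempty)
    (hb : Bornology.IsBounded M) (x : H) {ε : ℝ} (hε : 0 < ε) :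
    ∃ p ∈ M, ∀ y ∈ M, dist p y ≤ dist x y + ε := by
  set D := diam M
  -- chosen so that both error terms `η / t` and `t * dist p y ^ 2` below are at most `ε ^ 2 / 2`
  set t := ε ^ 2 / (2 * (D ^ 2 + ε ^ 2))
  have ht₀ : 0 < t := by positivity
  have ht₁ : t ≤ 1 := by
    rw [div_le_one (by positivity)]; nlinarith [sq_nonneg D]
  have htD : t * D ^ 2 ≤ ε ^ 2 / 2 := by
    rw [div_mul_eq_mul_div, div_le_div_iff₀ (by positivity) two_pos]
    nlinarith [sq_nonneg D, sq_nonneg ε]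
  obtain ⟨p, hp, hnear⟩ :=
    exists_mem_forall_sq_dist_le_add hne x (by positivity : 0 < t * ε ^ 2 / 2)
  refine ⟨p, hp, fun y hy => ?_⟩
  have hsq := hM.sq_dist_le_of_forall_sq_dist_le_add hp hnear hy ht₀ ht₁
  have hpy : dist p y ^ 2 ≤ D ^ 2 := pow_le_pow_left₀ dist_nonneg (dist_le_diam_of_mem hb hp hy) 2
  rw [mul_div_assoc, mul_div_cancel_left₀ _ ht₀.ne'] at hsq
  have hle : dist p y ^ 2 ≤ (dist x y + ε) ^ 2 := by nlinarith [dist_nonneg (x := x) (y := y)]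
  exact (pow_le_pow_iff_left₀ dist_nonneg (by positivity) two_ne_zero).1 hle

theorem Convex.exists_mem_frontier_forall_dist_le_add {M : Set H} (hM : Convex ℝ M)
    (hne : M.Nonempty) (hb : Bornology.IsBounded M) {x : H} (hx : x ∉ interior M) {ε : ℝ}
    (hε : 0 < ε) : ∃ q ∈ frontier M, ∀ y ∈ M, dist q y ≤ dist x y + ε := by
  by_cases hxM : x ∈ M
  · exact ⟨x, ⟨subset_closure hxM, hx⟩, fun y _ => le_add_of_nonneg_right hε.le⟩
  obtain ⟨p, hp, hpy⟩ := hM.exists_mem_forall_dist_le_add hne hb x hε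
  obtain ⟨q, hqseg, hqf⟩ := (convex_segment p x).isPreconnected.inter_frontier_nonempty
    ⟨p, left_mem_segment ℝ p x, hp⟩ ⟨x, right_mem_segment ℝ p x, hxM⟩
  refine ⟨q, hqf, fun y hy => ?_⟩
  calc dist q y ≤ max (dist p y) (dist x y) :=
        (convexOn_dist y convex_univ).le_on_segment trivial trivial hqseg
    _ ≤ dist x y + ε := max_le (hpy y hy) (le_add_of_nonneg_right hε.le)

end InnerProductSpace

theorem self_chebyshev_radius_monotone_general
    {H : Type*} [NormedAddCommGroup H] [InnerProductSpace ℝ H]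
    (M₁ M₂ : Set H)
    (h₁ : M₁.Nonempty) (h₁conv : Convex ℝ M₁) (h₁b : Bornology.IsBounded M₁)
    (h₁cl : IsClosed M₁)
    (h₂ : M₂.Nonempty) (h₂b : Bornology.IsBounded M₂)
    (hsub : M₁ ⊆ M₂)
    (δ : Set H → ℝ)
    (hδ : ∀ Γ : Set H, δ Γ = ⨅ x : Γ, ⨆ y : Γ, dist (x : H) (y : H)) :
    δ (frontier M₁) ≤ δ (frontier M₂) := by
  obtain rfl : δ = selfChebyshevRadius := funext hδ
  rcases subsingleton_or_nontrivial H with hH | hH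
  · simp
  refine selfChebyshevRadius_le_of_forall_exists
    (nonempty_frontier_iff.2 ⟨h₂, fun h => NormedSpace.unbounded_univ ℝ H (h ▸ h₂b)⟩)
    (h₂b.closure.subset frontier_subset_closure) fun x₂ hx₂ ε hε => ?_
  obtain ⟨x₁, hx₁, hclose⟩ := h₁conv.exists_mem_frontier_forall_dist_le_add h₁ h₁b
    (fun h => hx₂.2 (interior_mono hsub h)) hε
  refine ⟨x₁, hx₁, fun y₁ hy₁ => ?_⟩
  have hy₁ : y₁ ∈ M₁ := h₁cl.frontier_subset hy₁
  obtain ⟨y₂, hy₂, hfar⟩ := exists_mem_frontier_dist_le_dist h₂b hx₂ (hsub hy₁)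
  exact ⟨y₂, hy₂, (hclose y₁ hy₁).trans (by linarith)⟩

theorem self_chebyshev_radius_monotone
    {H : Type*} [NormedAddCommGroup H] [InnerProductSpace ℝ H]
    (M₁ M₂ : Set H)
    (h₁ : M₁.Nonempty) (h₁conv : Convex ℝ M₁) (h₁b : Bornology.IsBounded M₁)
    (h₁cl : IsClosed M₁)
    (h₂ : M₂.Nonempty) (h₂conv : Convex ℝ M₂) (h₂b : Bornology.IsBounded M₂)
    (h₂cl : IsClosed M₂)
    (hsub : M₁ ⊆ M₂)
    (δ : Set H → ℝ)
    (hδ : ∀ Γ : Set H, δ Γ = ⨅ x : Γ, ⨆ y : Γ, dist (x : H) (y : H)) :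
    δ (frontier M₁) ≤ δ (frontier M₂) :=
  self_chebyshev_radius_monotone_general M₁ M₂ h₁ h₁conv h₁b h₁cl h₂ h₂b hsub δ hδ
end

section
/- Let Γ ⊂ ℝ² be a convex curve (the boundary of a convex compact set) containing a line segment [p,q] such that Γ is contained in the closed disk of radius d(p,q)/2 centered at the midpoint o of [p,q]. Then the self Chebyshev radius of Γ equals d(p,q)/2, and o is the unique self Chebyshev center of Γ. -/
/-!
Both endpoints `p`, `q` lie on `Γ`, so by the triangle inequality every point of the plane is at
distance at least `d(p,q)/2` from one of them; the midpoint `o` of the boundary segment attains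
this bound because `Γ` lies in the disk of radius `d(p,q)/2` around it. A self Chebyshev center
`x` is then within `d(p,q)/2` of both `p` and `q`, which forces equality in the triangle
inequality, and strict convexity of the Euclidean norm makes `x = o`.
-/

open Metric

section PseudoMetricSpace

variable {X : Type*} [PseudoMetricSpace X] {S : Set X} {o p q x : X} {r : ℝ}

lemma Bornology.IsBounded.bddAbove_range_dist (hS : Bornology.IsBounded S) (x : X) :
    BddAbove (Set.range fun y : S ↦ dist x y) := by
  obtain ⟨C, hC⟩ := hS.subset_closedBall x
  exact ⟨C, Set.forall_mem_range.2 fun y ↦ mem_closedBall'.1 (hC y.2)⟩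

lemma iSup_dist_le_iff_subset_closedBall (hS : Bornology.IsBounded S) (hne : S.Nonempty) :
    ⨆ y : S, dist x y ≤ r ↔ S ⊆ closedBall x r := by
  have : Nonempty S := hne.to_subtype
  rw [ciSup_le_iff (hS.bddAbove_range_dist x)]
  exact ⟨fun h y hy ↦ mem_closedBall'.2 (h ⟨y, hy⟩), fun h y ↦ mem_closedBall'.1 (h y.2)⟩

lemma half_dist_le_iSup_dist (hS : Bornology.IsBounded S) (hp : p ∈ S) (hq : q ∈ S) (x : X) :
    dist p q / 2 ≤ ⨆ y : S, dist x y := by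
  have hxp : dist x p ≤ ⨆ y : S, dist x y := le_ciSup (hS.bddAbove_range_dist x) ⟨p, hp⟩
  have hxq : dist x q ≤ ⨆ y : S, dist x y := le_ciSup (hS.bddAbove_range_dist x) ⟨q, hq⟩
  linarith [dist_triangle_left p q x]

lemma iSup_dist_eq_half_dist_iff (hS : Bornology.IsBounded S) (hp : p ∈ S) (hq : q ∈ S) :
    ⨆ y : S, dist x y = dist p q / 2 ↔ S ⊆ closedBall x (dist p q / 2) := by
  rw [← iSup_dist_le_iff_subset_closedBall hS ⟨p, hp⟩]
  exact ⟨le_of_eq, fun h ↦ h.antisymm (half_dist_le_iSup_dist hS hp hq x)⟩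

lemma iInf_iSup_dist_eq_half_dist (hp : p ∈ S) (hq : q ∈ S) (ho : o ∈ S)
    (hS : S ⊆ closedBall o (dist p q / 2)) :
    ⨅ x : S, ⨆ y : S, dist (x : X) y = dist p q / 2 := by
  have hbdd : Bornology.IsBounded S := isBounded_closedBall.subset hS
  have : Nonempty S := ⟨⟨o, ho⟩⟩
  have hlower : ∀ x : S, dist p q / 2 ≤ ⨆ y : S, dist (x : X) y :=
    fun x ↦ half_dist_le_iSup_dist hbdd hp hq x
  refine le_antisymm ?_ (le_ciInf hlower)
  refine ciInf_le_of_le ⟨_, Set.forall_mem_range.2 hlower⟩ ⟨o, ho⟩ ?_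
  exact ((iSup_dist_eq_half_dist_iff hbdd hp hq).2 hS).le

end PseudoMetricSpace

lemma eq_midpoint_of_dist_le_half {V P : Type*} [NormedAddCommGroup V] [NormedSpace ℝ V]
    [StrictConvexSpace ℝ V] [MetricSpace P] [NormedAddTorsor V P] {p q x : P}
    (hp : dist p x ≤ dist p q / 2) (hq : dist x q ≤ dist p q / 2) :
    x = midpoint ℝ p q := by
  have := dist_triangle p x q
  exact eq_midpoint_of_dist_eq_half (by linarith) (by linarith)

theorem self_chebyshev_center_of_semicircle_general
    (K : Set (EuclideanSpace ℝ (Fin 2)))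
    (p q : EuclideanSpace ℝ (Fin 2))
    (hseg : segment ℝ p q ⊆ frontier K)
    (hball : frontier K ⊆ closedBall (midpoint ℝ p q) (dist p q / 2)) :
    (⨅ x : frontier K, ⨆ y : frontier K,
        dist (x : EuclideanSpace ℝ (Fin 2)) (y : EuclideanSpace ℝ (Fin 2)))
      = dist p q / 2 ∧
    midpoint ℝ p q ∈ frontier K ∧
    (⨆ y : frontier K, dist (midpoint ℝ p q) (y : EuclideanSpace ℝ (Fin 2)))
      = dist p q / 2 ∧
    ∀ x ∈ frontier K,
      (⨆ y : frontier K, dist x (y : EuclideanSpace ℝ (Fin 2))) = dist p q / 2 →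
        x = midpoint ℝ p q := by
  have hp := hseg (left_mem_segment ℝ p q)
  have hq := hseg (right_mem_segment ℝ p q)
  have ho := hseg (midpoint_mem_segment p q)
  have hbdd : Bornology.IsBounded (frontier K) := isBounded_closedBall.subset hball
  refine ⟨iInf_iSup_dist_eq_half_dist hp hq ho hball, ho,
    (iSup_dist_eq_half_dist_iff hbdd hp hq).2 hball, fun x _ hx ↦ ?_⟩
  have hxball := (iSup_dist_eq_half_dist_iff hbdd hp hq).1 hx
  exact eq_midpoint_of_dist_le_half (mem_closedBall.1 (hxball hp)) (mem_closedBall'.1 (hxball hq))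

theorem self_chebyshev_center_of_semicircle
    (K : Set (EuclideanSpace ℝ (Fin 2))) (hKconv : Convex ℝ K) (hKcomp : IsCompact K)
    (p q : EuclideanSpace ℝ (Fin 2)) (hpq : p ≠ q)
    (hseg : segment ℝ p q ⊆ frontier K)
    (hball : frontier K ⊆ closedBall (midpoint ℝ p q) (dist p q / 2)) :
    (⨅ x : frontier K, ⨆ y : frontier K,
        dist (x : EuclideanSpace ℝ (Fin 2)) (y : EuclideanSpace ℝ (Fin 2)))
      = dist p q / 2 ∧
    midpoint ℝ p q ∈ frontier K ∧
    (⨆ y : frontier K, dist (midpoint ℝ p q) (y : EuclideanSpace ℝ (Fin 2)))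
      = dist p q / 2 ∧
    ∀ x ∈ frontier K,
      (⨆ y : frontier K, dist x (y : EuclideanSpace ℝ (Fin 2))) = dist p q / 2 →
        x = midpoint ℝ p q :=
  self_chebyshev_center_of_semicircle_general K p q hseg hball
end

section
/- Let P be a convex n-gon in ℝ² with boundary Γ, suppose some vertex A of P is a local minimum point of the function μ(x) = max_{y ∈ Γ} d(x,y) restricted to Γ, and suppose μ(A) equals the maximum of the distances from A to its two adjacent vertices. Then the perimeter L(Γ) satisfies L(Γ) ≥ (2+√2)·δ(Γ), where δ(Γ) is the self Chebyshev radius of Γ. -/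
/-!
Let `r = μ(A)` and let `C` be the neighbour of `A` with `|AC| = r`. Moving `A` a little along the
edge `[A, C]` would strictly decrease `μ` unless some point `y ∈ Γ` with `|Ay| = r` makes a
non-acute angle `CAy`, so local minimality provides such a `y`. Then `|Cy| ≥ √2 r`, and the
closed polygonal path through `A`, `C` and `y` is at least as long as the triangle `ACy`, whose
perimeter is at least `(2 + √2) r ≥ (2 + √2) δ(Γ)`.
-/

open Real Filter Topology Finset AffineMap

noncomputable def supDist {α : Type*} [PseudoMetricSpace α] (s : Set α) (x : α) : ℝ :=
  ⨆ y : s, dist x y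

section SupDist

variable {α : Type*} [PseudoMetricSpace α] {s : Set α}

theorem supDist_nonneg (s : Set α) (x : α) : 0 ≤ supDist s x :=
  Real.iSup_nonneg fun _ => dist_nonneg

theorem IsCompact.dist_le_supDist (hs : IsCompact s) {y : α} (hy : y ∈ s) (x : α) :
    dist x y ≤ supDist s x := by
  refine le_ciSup (f := fun z : s => dist x z) ?_ ⟨y, hy⟩
  rw [← Set.image_eq_range]
  exact hs.bddAbove_image (continuous_const.dist continuous_id).continuousOn

theorem IsCompact.supDist_lt (hs : IsCompact s) (hne : s.Nonempty) {x : α} {c : ℝ}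
    (h : ∀ y ∈ s, dist x y < c) : supDist s x < c := by
  obtain ⟨y, hy, hmax⟩ :=
    hs.exists_isMaxOn hne (continuous_const.dist continuous_id (f := fun _ => x)).continuousOn
  have : Nonempty s := hne.to_subtype
  exact (ciSup_le fun z : s => hmax z.2).trans_lt (h y hy)

theorem iInf_supDist_le {y : α} (hy : y ∈ s) : ⨅ x : s, supDist s x ≤ supDist s y :=
  ciInf_le (f := fun x : s => supDist s x) ⟨0, Set.forall_mem_range.2 fun x => supDist_nonneg s x⟩
    ⟨y, hy⟩

end SupDist

theorem Function.Periodic.sum_Ico_add {M : Type*} [AddCommMonoid M] {f : ℕ → M} {n : ℕ}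
    (hf : Function.Periodic f n) (p : ℕ) :
    ∑ i ∈ Ico p (p + n), f i = ∑ i ∈ range n, f i := by
  calc ∑ i ∈ Ico p (p + n), f i = (((Multiset.Ico p (p + n)).map (· % n)).map f).sum := by
        rw [Multiset.map_map]
        exact Finset.sum_congr rfl fun i _ => (hf.map_mod_nat i).symm
    _ = ∑ i ∈ range n, f i := by rw [Nat.multiset_Ico_map_mod]; rfl

section PolygonPerimeter

variable {α : Type*} [PseudoMetricSpace α] {A : ℕ → α} {n : ℕ}

noncomputable def polygonPerimeter (A : ℕ → α) (n : ℕ) : ℝ :=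
  ∑ i : Fin n, dist (A i) (A ((i : ℕ) + 1))

theorem polygonPerimeter_eq_sum_Ico (hA : Function.Periodic A n) (p : ℕ) :
    polygonPerimeter A n = ∑ i ∈ Ico p (p + n), dist (A i) (A (i + 1)) := by
  have he : Function.Periodic (fun i => dist (A i) (A (i + 1))) n := fun i => by
    simp only [hA i, add_right_comm i n 1, hA (i + 1)]
  rw [he.sum_Ico_add, polygonPerimeter,
    Fin.sum_univ_eq_sum_range (fun i => dist (A i) (A (i + 1)))]

end PolygonPerimeter

section Polygon

variable {E : Type*} [NormedAddCommGroup E] [NormedSpace ℝ E] {A : ℕ → E} {n : ℕ} {z : E}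

def closedPolygon (A : ℕ → E) (n : ℕ) : Set E :=
  ⋃ i : Fin n, segment ℝ (A i) (A ((i : ℕ) + 1))

theorem isCompact_closedPolygon : IsCompact (closedPolygon A n) :=
  isCompact_iUnion fun _ => by
    rw [segment_eq_image_lineMap]
    exact isCompact_Icc.image lineMap_continuous

theorem segment_subset_closedPolygon (hA : Function.Periodic A n) (hn : 0 < n) (i : ℕ) :
    segment ℝ (A i) (A (i + 1)) ⊆ closedPolygon A n := by
  refine Set.subset_iUnion_of_subset ⟨i % n, Nat.mod_lt i hn⟩ ?_
  rw [← hA.map_mod_nat (i % n + 1), Nat.mod_add_mod, hA.map_mod_nat, hA.map_mod_nat]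

theorem exists_mem_segment_of_mem_closedPolygon (hA : Function.Periodic A n)
    (hz : z ∈ closedPolygon A n) (p : ℕ) :
    ∃ m ∈ Ico p (p + n), z ∈ segment ℝ (A m) (A (m + 1)) := by
  obtain ⟨i, hi⟩ := Set.mem_iUnion.1 hz
  obtain ⟨m, hm, hmi⟩ := Finset.mem_image.1 <|
    (Nat.image_Ico_mod p n).symm ▸ Finset.mem_range.2 i.isLt
  refine ⟨m, hm, ?_⟩
  rwa [← hA.map_mod_nat m, ← hA.map_mod_nat (m + 1), ← Nat.mod_add_mod, hmi, hA.map_mod_nat]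

theorem dist_add_dist_le_sum_Ico {p m q : ℕ} (hpm : p ≤ m) (hmq : m < q)
    (hz : z ∈ segment ℝ (A m) (A (m + 1))) :
    dist (A p) z + dist z (A q) ≤ ∑ i ∈ Ico p q, dist (A i) (A (i + 1)) := by
  rw [← sum_Ico_consecutive _ hpm hmq.le, sum_eq_sum_Ico_succ_bot hmq]
  linarith [dist_le_Ico_sum_dist A hpm, dist_le_Ico_sum_dist A (Nat.succ_le_of_lt hmq),
    dist_add_dist_of_mem_segment hz, dist_triangle (A p) (A m) z,
    dist_triangle z (A (m + 1)) (A q)]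

theorem edge_add_dist_add_dist_le_polygonPerimeter (hA : Function.Periodic A n) (p : ℕ)
    (hz : z ∈ closedPolygon A n) :
    dist (A p) (A (p + 1)) + dist (A p) z + dist (A (p + 1)) z ≤ polygonPerimeter A n := by
  obtain ⟨m, hm, hzm⟩ := exists_mem_segment_of_mem_closedPolygon hA hz p
  obtain ⟨hpm, hmn⟩ := Finset.mem_Ico.1 hm
  rw [polygonPerimeter_eq_sum_Ico hA p, sum_eq_sum_Ico_succ_bot (hpm.trans_lt hmn)]
  rcases hpm.eq_or_lt with rfl | hpm
  · -- `z` lies on the edge `[A p, A (p + 1)]`; the rest of the polygon returns to `A p`.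
    have hclose := dist_le_Ico_sum_dist A (Nat.succ_le_of_lt hmn)
    rw [hA p] at hclose
    linarith [dist_add_dist_of_mem_segment hzm, dist_comm (A p) (A (p + 1)),
      dist_comm z (A (p + 1))]
  · have hpath := dist_add_dist_le_sum_Ico hpm hmn hzm
    rw [hA p] at hpath
    linarith [dist_comm z (A p)]

end Polygon

section InnerProductSpace

variable {E : Type*} [NormedAddCommGroup E] [InnerProductSpace ℝ E] {s : Set E} {a c y : E}

theorem dist_lineMap_sq (a c y : E) (t : ℝ) :
    dist (lineMap a c t) y ^ 2 =
      dist a y ^ 2 - 2 * t * inner ℝ (c - a) (y - a) + t ^ 2 * dist a c ^ 2 := by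
  have h : lineMap a c t - y = -(y - a) + t • (c - a) := by
    rw [lineMap_apply_module']; abel
  rw [dist_eq_norm, h, norm_add_sq_real, norm_neg, norm_smul, inner_neg_left,
    real_inner_smul_right, real_inner_comm, dist_eq_norm, dist_eq_norm, norm_sub_rev a y,
    norm_sub_rev a c, Real.norm_eq_abs, mul_pow, sq_abs]
  ring

theorem sqrt_two_mul_le_dist_of_inner_nonpos (hy : dist a y = dist a c)
    (hinner : inner ℝ (c - a) (y - a) ≤ 0) : √2 * dist a c ≤ dist c y := by
  have hsq : 2 * dist a c ^ 2 ≤ dist c y ^ 2 := by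
    have h : c - y = (c - a) - (y - a) := by abel
    rw [dist_eq_norm c y, h, norm_sub_sq_real, ← dist_eq_norm', ← dist_eq_norm', hy]
    linarith
  calc √2 * dist a c = √(2 * dist a c ^ 2) := by
        rw [sqrt_mul zero_le_two, sqrt_sq dist_nonneg]
    _ ≤ √(dist c y ^ 2) := sqrt_le_sqrt hsq
    _ = dist c y := sqrt_sq dist_nonneg

theorem tendsto_lineMap_nhdsWithin (hseg : segment ℝ a c ⊆ s) :
    Tendsto (lineMap a c) (𝓝[>] (0 : ℝ)) (𝓝[s] a) := by
  refine tendsto_nhdsWithin_iff.2 ⟨?_, ?_⟩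
  · have h := (lineMap_continuous (p := a) (q := c) (R := ℝ)).tendsto 0
    rw [lineMap_apply_zero] at h
    exact h.mono_left nhdsWithin_le_nhds
  · filter_upwards [Ioc_mem_nhdsGT one_pos] with t ht
    exact hseg (lineMap_mem_segment ℝ a c ⟨ht.1.le, ht.2⟩)

theorem eventually_supDist_lineMap_lt (hs : IsCompact s) (ha : a ∈ s)
    (hc : dist a c = supDist s a)
    (hfar : ∀ y ∈ s, dist a y = supDist s a → 0 < inner ℝ (c - a) (y - a)) :
    ∀ᶠ t in 𝓝[>] (0 : ℝ), supDist s (lineMap a c t) < supDist s a := by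
  set r := supDist s a
  -- `ψ > 0` on `s`: a point of `s` is either strictly closer to `a` than `r`, or lies ahead of `a`.
  set ψ : E → ℝ := fun y => max (inner ℝ (c - a) (y - a)) (r - dist a y)
  have hψ : Continuous ψ := by fun_prop
  obtain ⟨y₀, hy₀, hmin⟩ := hs.exists_isMinOn ⟨a, ha⟩ hψ.continuousOn
  set ε := ψ y₀
  have hε : 0 < ε := by
    rcases (hs.dist_le_supDist hy₀ a).eq_or_lt with h | h
    · exact lt_max_of_lt_left (hfar y₀ hy₀ h)
    · exact lt_max_of_lt_right (sub_pos.2 h)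
  have hsmall : ∀ᶠ t in 𝓝[>] (0 : ℝ), t * r < ε ∧ t * r ^ 2 < 2 * ε := by
    have h₀ : ∀ k : ℝ, Tendsto (fun t : ℝ => t * k) (𝓝[>] 0) (𝓝 0) := fun k =>
      ((continuous_mul_const k).tendsto' 0 0 (zero_mul k)).mono_left nhdsWithin_le_nhds
    exact ((h₀ r).eventually_lt_const hε).and ((h₀ (r ^ 2)).eventually_lt_const (by linarith))
  filter_upwards [hsmall, self_mem_nhdsWithin] with t ⟨ht₁, ht₂⟩ (ht : 0 < t)
  refine hs.supDist_lt ⟨a, ha⟩ fun y hy => ?_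
  have hyr := hs.dist_le_supDist hy a
  rcases le_max_iff.1 (show ε ≤ ψ y from hmin hy) with h | h
  · have hsq : dist (lineMap a c t) y ^ 2 < r ^ 2 := by
      rw [dist_lineMap_sq, hc]
      nlinarith [mul_lt_mul_of_pos_left ht₂ ht, mul_le_mul_of_nonneg_left h ht.le,
        pow_le_pow_left₀ dist_nonneg hyr 2]
    exact lt_of_pow_lt_pow_left₀ 2 (supDist_nonneg s a) hsq
  · calc dist (lineMap a c t) y ≤ dist (lineMap a c t) a + dist a y := dist_triangle _ _ _
      _ = t * r + dist a y := by rw [dist_lineMap_left, Real.norm_of_nonneg ht.le, hc]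
      _ < r := by linarith

theorem exists_inner_nonpos_of_isLocalMinOn_supDist (hs : IsCompact s)
    (hseg : segment ℝ a c ⊆ s) (hmin : IsLocalMinOn (supDist s) s a)
    (hc : dist a c = supDist s a) :
    ∃ y ∈ s, dist a y = supDist s a ∧ inner ℝ (c - a) (y - a) ≤ 0 := by
  by_contra! hfar
  have ha : a ∈ s := hseg (left_mem_segment ℝ a c)
  obtain ⟨t, hge, hlt⟩ := ((tendsto_lineMap_nhdsWithin hseg).eventually hmin).and
    (eventually_supDist_lineMap_lt hs ha hc hfar) |>.exists
  exact (hge.trans_lt hlt).false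

theorem two_add_sqrt_two_mul_supDist_le_polygonPerimeter {A : ℕ → E} {n : ℕ}
    (hA : Function.Periodic A n) (hn : 0 < n) {p : ℕ} {u c : E}
    (hedge : A p = u ∧ A (p + 1) = c ∨ A p = c ∧ A (p + 1) = u)
    (hmin : IsLocalMinOn (supDist (closedPolygon A n)) (closedPolygon A n) u)
    (hc : dist u c = supDist (closedPolygon A n) u) :
    (2 + √2) * supDist (closedPolygon A n) u ≤ polygonPerimeter A n := by
  obtain ⟨hseg, htri⟩ : segment ℝ u c ⊆ closedPolygon A n ∧ ∀ z ∈ closedPolygon A n,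
      dist u c + dist u z + dist c z ≤ polygonPerimeter A n := by
    rcases hedge with ⟨rfl, rfl⟩ | ⟨rfl, rfl⟩
    · exact ⟨segment_subset_closedPolygon hA hn p,
        fun z hz => edge_add_dist_add_dist_le_polygonPerimeter hA p hz⟩
    · refine ⟨segment_symm ℝ (A p) (A (p + 1)) ▸ segment_subset_closedPolygon hA hn p,
        fun z hz => ?_⟩
      linarith [edge_add_dist_add_dist_le_polygonPerimeter hA p hz, dist_comm (A p) (A (p + 1))]
  obtain ⟨y, hy, hyu, hinner⟩ :=
    exists_inner_nonpos_of_isLocalMinOn_supDist isCompact_closedPolygon hseg hmin hc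
  calc (2 + √2) * supDist (closedPolygon A n) u = dist u c + dist u y + √2 * dist u c := by
        rw [hyu, hc]; ring
    _ ≤ dist u c + dist u y + dist c y := by
        gcongr; exact sqrt_two_mul_le_dist_of_inner_nonpos (hyu.trans hc.symm) hinner
    _ ≤ polygonPerimeter A n := htri y hy

end InnerProductSpace

theorem perimeter_bound_of_vertex_local_min_general
    {n : ℕ} (hn : 3 ≤ n) (A : ℕ → EuclideanSpace ℝ (Fin 2))
    (hper : ∀ i, A (i + n) = A i)
    (Γ : Set (EuclideanSpace ℝ (Fin 2)))
    (hΓ : Γ = ⋃ i : Fin n, segment ℝ (A i) (A ((i : ℕ) + 1)))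
    (μ : EuclideanSpace ℝ (Fin 2) → ℝ)
    (hμ : ∀ x, μ x = ⨆ y : Γ, dist x (y : EuclideanSpace ℝ (Fin 2)))
    (δ L : ℝ)
    (hδ : δ = ⨅ x : Γ, μ (x : EuclideanSpace ℝ (Fin 2)))
    (hL : L = ∑ i : Fin n, dist (A i) (A ((i : ℕ) + 1)))
    (j : ℕ) (hloc : IsLocalMinOn μ Γ (A j))
    (hval : μ (A j) = max (dist (A j) (A (j + n - 1))) (dist (A j) (A (j + 1)))) :
    (2 + Real.sqrt 2) * δ ≤ L := by
  have hn₀ : 0 < n := by omega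
  subst hΓ hδ hL
  obtain rfl : μ = supDist (closedPolygon A n) := funext hμ
  have hδ := iInf_supDist_le <|
    segment_subset_closedPolygon hper hn₀ j (left_mem_segment ℝ (A j) (A (j + 1)))
  refine (mul_le_mul_of_nonneg_left hδ (by positivity)).trans ?_
  rcases le_total (dist (A j) (A (j + n - 1))) (dist (A j) (A (j + 1))) with hle | hle
  · exact two_add_sqrt_two_mul_supDist_le_polygonPerimeter hper hn₀ (p := j)
      (Or.inl ⟨rfl, rfl⟩) hloc (by rw [hval, max_eq_right hle])
  · have hnext : A (j + n - 1 + 1) = A j := by rw [Nat.sub_add_cancel (by omega), hper]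
    exact two_add_sqrt_two_mul_supDist_le_polygonPerimeter hper hn₀ (p := j + n - 1)
      (Or.inr ⟨rfl, hnext⟩) hloc (by rw [hval, max_eq_left hle])

theorem perimeter_bound_of_vertex_local_min
    {n : ℕ} (hn : 3 ≤ n) (A : ℕ → EuclideanSpace ℝ (Fin 2))
    (hper : ∀ i, A (i + n) = A i)
    (Γ : Set (EuclideanSpace ℝ (Fin 2)))
    (hΓ : Γ = ⋃ i : Fin n, segment ℝ (A i) (A ((i : ℕ) + 1)))
    (hbd : Γ = frontier (convexHull ℝ (Set.range A)))
    (μ : EuclideanSpace ℝ (Fin 2) → ℝ)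
    (hμ : ∀ x, μ x = ⨆ y : Γ, dist x (y : EuclideanSpace ℝ (Fin 2)))
    (δ L : ℝ)
    (hδ : δ = ⨅ x : Γ, μ (x : EuclideanSpace ℝ (Fin 2)))
    (hL : L = ∑ i : Fin n, dist (A i) (A ((i : ℕ) + 1)))
    (j : ℕ) (hloc : IsLocalMinOn μ Γ (A j))
    (hval : μ (A j) = max (dist (A j) (A (j + n - 1))) (dist (A j) (A (j + 1)))) :
    (2 + Real.sqrt 2) * δ ≤ L :=
  perimeter_bound_of_vertex_local_min_general hn A hper Γ hΓ μ hμ δ L hδ hL j hloc hval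
end

section
/- Among all quadrilaterals ABCD in ℝ² with given diagonal lengths d(A,C), d(B,D) and given angle θ between the diagonals, the parallelogram has the smallest perimeter. -/
/-!
With `u = C - A` and `v = D - B`, one has `(B - A) + (C - D) = u - v` and
`(C - B) + (D - A) = u + v`, so by the triangle inequality the perimeter of any quadrilateral
is at least `‖u - v‖ + ‖u + v‖`, with equality for a parallelogram, whose opposite sides are
equal and parallel. By the law of cosines `‖u ± v‖` depends only on `‖u‖`, `‖v‖` and the
angle between `u` and `v`.
-/

open InnerProductGeometry

section InnerProductSpace

variable {V : Type*} [NormedAddCommGroup V] [InnerProductSpace ℝ V] {u v u' v' : V}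

theorem inner_eq_of_norm_eq_of_angle_eq (hu : ‖u'‖ = ‖u‖) (hv : ‖v'‖ = ‖v‖)
    (h : angle u' v' = angle u v) : inner ℝ u' v' = inner ℝ u v := by
  rw [← cos_angle_mul_norm_mul_norm, ← cos_angle_mul_norm_mul_norm u v, h, hu, hv]

theorem norm_add_eq_of_norm_eq_of_angle_eq (hu : ‖u'‖ = ‖u‖) (hv : ‖v'‖ = ‖v‖)
    (h : angle u' v' = angle u v) : ‖u' + v'‖ = ‖u + v‖ := by
  rw [← sq_eq_sq₀ (norm_nonneg _) (norm_nonneg _), norm_add_sq_real, norm_add_sq_real, hu, hv,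
    inner_eq_of_norm_eq_of_angle_eq hu hv h]

theorem norm_sub_eq_of_norm_eq_of_angle_eq (hu : ‖u'‖ = ‖u‖) (hv : ‖v'‖ = ‖v‖)
    (h : angle u' v' = angle u v) : ‖u' - v'‖ = ‖u - v‖ := by
  rw [← sq_eq_sq₀ (norm_nonneg _) (norm_nonneg _), norm_sub_sq_real, norm_sub_sq_real, hu, hv,
    inner_eq_of_norm_eq_of_angle_eq hu hv h]

end InnerProductSpace

section Quadrilateral

variable {E : Type*} [NormedAddCommGroup E] (A B C D : E)

theorem norm_diagonal_sub_le_dist_add_dist : ‖(C - A) - (D - B)‖ ≤ dist A B + dist C D := by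
  rw [dist_comm, dist_eq_norm, dist_eq_norm, show (C - A) - (D - B) = (B - A) + (C - D) by abel]
  exact norm_add_le _ _

theorem norm_diagonal_add_le_dist_add_dist : ‖(C - A) + (D - B)‖ ≤ dist B C + dist D A := by
  rw [dist_comm, dist_eq_norm, dist_eq_norm, show (C - A) + (D - B) = (C - B) + (D - A) by abel]
  exact norm_add_le _ _

variable [NormedSpace ℝ E] {A B C D}

theorem dist_add_dist_eq_norm_diagonal_sub_of_parallelogram (hpar : B - A = C - D) :
    dist A B + dist C D = ‖(C - A) - (D - B)‖ := by
  rw [show (C - A) - (D - B) = (B - A) + (C - D) by abel, ← hpar, ← two_smul ℝ, norm_smul,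
    Real.norm_two, two_mul, dist_eq_norm', dist_eq_norm, ← hpar]

theorem dist_add_dist_eq_norm_diagonal_add_of_parallelogram (hpar : B - A = C - D) :
    dist B C + dist D A = ‖(C - A) + (D - B)‖ := by
  have hpar' : D - A = C - B := by rw [sub_eq_sub_iff_add_eq_add] at hpar ⊢; rw [add_comm, hpar]
  rw [show (C - A) + (D - B) = (C - B) + (D - A) by abel, hpar', ← two_smul ℝ, norm_smul,
    Real.norm_two, two_mul, dist_eq_norm', dist_eq_norm, hpar']

end Quadrilateral

theorem parallelogram_min_perimeter_given_diagonals
    (A B C D A' B' C' D' : EuclideanSpace ℝ (Fin 2))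
    (hpar : B' - A' = C' - D')
    (hd1 : dist A' C' = dist A C) (hd2 : dist B' D' = dist B D)
    (hangle : InnerProductGeometry.angle (C' - A') (D' - B')
      = InnerProductGeometry.angle (C - A) (D - B)) :
    dist A' B' + dist B' C' + dist C' D' + dist D' A'
      ≤ dist A B + dist B C + dist C D + dist D A := by
  rw [dist_eq_norm', dist_eq_norm'] at hd1 hd2
  calc dist A' B' + dist B' C' + dist C' D' + dist D' A'
      = (dist A' B' + dist C' D') + (dist B' C' + dist D' A') := by ring
    _ = ‖(C' - A') - (D' - B')‖ + ‖(C' - A') + (D' - B')‖ := by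
      rw [dist_add_dist_eq_norm_diagonal_sub_of_parallelogram hpar,
        dist_add_dist_eq_norm_diagonal_add_of_parallelogram hpar]
    _ = ‖(C - A) - (D - B)‖ + ‖(C - A) + (D - B)‖ := by
      rw [norm_sub_eq_of_norm_eq_of_angle_eq hd1 hd2 hangle,
        norm_add_eq_of_norm_eq_of_angle_eq hd1 hd2 hangle]
    _ ≤ (dist A B + dist C D) + (dist B C + dist D A) :=
      add_le_add (norm_diagonal_sub_le_dist_add_dist A B C D)
        (norm_diagonal_add_le_dist_add_dist A B C D)
    _ = dist A B + dist B C + dist C D + dist D A := by ring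
end

section
/- The function g(α) = (2 + cos α − cos²α)/sin α + √(2cos α − cos²α) + √(2 + 2cos²α − 2cos α − 2 sin α·√(2cos α − cos²α)) attains its minimal value on the interval [π/3, π/2] exactly at α = π/2, and this minimal value is 2 + √2. -/
/-!
Write `c = cos α`, `s = sin α`, `t = √(2c - c²)`. The last radicand is `(s - t)² + (1 - 2c)²`,
so the last root is at least `(s - t + 1 - 2c) / √2`. For this minorant the gap to `2 + √2`,
multiplied by `s √2`, is `c(√2 - 2) - (√2 + 1)c² + (2√2 + 1 + 2c)(1 - s) + (√2 - 1)ts`; it is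
positive for `0 < c ≤ 1/2` because `1 - s ≥ c²/2` and `(√2 - 1)ts > c(2 - √2 + c/2 - c²)`,
the latter a polynomial inequality after squaring. At `α = π/2` all estimates are equalities.
-/

open Real

theorem add_le_sqrt_two_mul_sqrt_sq_add_sq (a b : ℝ) : a + b ≤ √2 * √(a ^ 2 + b ^ 2) := by
  rw [← Real.sqrt_mul zero_le_two]
  exact (le_abs_self _).trans (Real.abs_le_sqrt (by nlinarith [sq_nonneg (a - b)]))

theorem sqrt_two_mem_Icc : √2 ∈ Set.Icc (7 / 5 : ℝ) (17 / 12) := by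
  constructor
  · rw [Real.le_sqrt] <;> norm_num
  · rw [Real.sqrt_le_left] <;> norm_num

theorem sq_div_two_le_one_sub {c s : ℝ} (hsc : s ^ 2 + c ^ 2 = 1) : c ^ 2 / 2 ≤ 1 - s := by
  nlinarith [sq_nonneg (1 - s)]

-- `3/5` and `1/6` stand for `2 - √2` and `(√2 - 1)²`; at `c = 1/2` the margin is `0.18 < 0.1875`.
theorem mul_sq_lt_of_le_one_half {c : ℝ} (hc₀ : 0 ≤ c) (hc : c ≤ 1 / 2) :
    c * (3 / 5 + c / 2 - c ^ 2) ^ 2 < (2 - c) * (1 - c ^ 2) / 6 := by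
  nlinarith [mul_nonneg hc₀ (by linarith : (0 : ℝ) ≤ 1 / 2 - c),
    mul_nonneg (mul_nonneg hc₀ hc₀) (by linarith : (0 : ℝ) ≤ 1 / 2 - c)]

theorem mul_lt_sqrt_two_sub_one_mul {c r : ℝ} (hc₀ : 0 < c) (hc : c ≤ 1 / 2) (hr : 0 ≤ r)
    (hr2 : r ^ 2 = c * (2 - c) * (1 - c ^ 2)) :
    c * (2 - √2 + c / 2 - c ^ 2) < (√2 - 1) * r := by
  obtain ⟨hq₁, hq₂⟩ := sqrt_two_mem_Icc
  have hq2 : √2 ^ 2 = 2 := Real.sq_sqrt zero_le_two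
  have hB : 0 ≤ 2 - √2 + c / 2 - c ^ 2 := by nlinarith
  refine lt_of_pow_lt_pow_left₀ 2 (by nlinarith) ?_
  calc (c * (2 - √2 + c / 2 - c ^ 2)) ^ 2
      ≤ c * (c * (3 / 5 + c / 2 - c ^ 2) ^ 2) := by
        rw [mul_pow, sq c, mul_assoc]
        gcongr
        all_goals linarith
    _ < c * ((2 - c) * (1 - c ^ 2) / 6) := by
        gcongr
        exact mul_sq_lt_of_le_one_half hc₀.le hc
    _ ≤ (√2 - 1) ^ 2 * r ^ 2 := by
        rw [hr2]
        have : (1 : ℝ) / 6 ≤ (√2 - 1) ^ 2 := by nlinarith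
        have : 0 ≤ c * ((2 - c) * (1 - c ^ 2)) :=
          mul_nonneg hc₀.le (mul_nonneg (by linarith) (by nlinarith))
        nlinarith
    _ = ((√2 - 1) * r) ^ 2 := by ring

theorem two_add_sqrt_two_lt_minorant {c s : ℝ} (hc₀ : 0 < c) (hc : c ≤ 1 / 2) (hs : 0 < s)
    (hsc : s ^ 2 + c ^ 2 = 1) :
    2 + √2 < (2 + c - c ^ 2) / s + √(2 * c - c ^ 2) + (s - √(2 * c - c ^ 2) + 1 - 2 * c) / √2 := by
  obtain ⟨hq₁, -⟩ := sqrt_two_mem_Icc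
  have hq2 : √2 ^ 2 = 2 := Real.sq_sqrt zero_le_two
  set t := √(2 * c - c ^ 2)
  have ht2 : t ^ 2 = 2 * c - c ^ 2 := Real.sq_sqrt (by nlinarith)
  have hts := mul_lt_sqrt_two_sub_one_mul hc₀ hc (mul_nonneg (Real.sqrt_nonneg _) hs.le)
    (show (t * s) ^ 2 = c * (2 - c) * (1 - c ^ 2) by rw [mul_pow, ht2]; linear_combination c * (2 - c) * hsc)
  have h1s := mul_le_mul_of_nonneg_left (sq_div_two_le_one_sub hsc)
    (by positivity : 0 ≤ 2 * √2 + 1 + 2 * c)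
  have hE : 0 < c * (√2 - 2) - (√2 + 1) * c ^ 2 + (2 * √2 + 1 + 2 * c) * (1 - s) + (√2 - 1) * (t * s) := by
    nlinarith
  have hid : (2 + c - c ^ 2) / s + t + (s - t + 1 - 2 * c) / √2 - (2 + √2) =
      (c * (√2 - 2) - (√2 + 1) * c ^ 2 + (2 * √2 + 1 + 2 * c) * (1 - s) + (√2 - 1) * (t * s)) / (s * √2) := by
    field_simp
    linear_combination hsc - s * hq2
  rw [← sub_pos, hid]
  exact div_pos hE (by positivity)

theorem div_sqrt_two_le_sqrt {c s t : ℝ} (hsc : s ^ 2 + c ^ 2 = 1) (ht : t ^ 2 = 2 * c - c ^ 2) :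
    (s - t + 1 - 2 * c) / √2 ≤ √(2 + 2 * c ^ 2 - 2 * c - 2 * s * t) := by
  have hsq : 2 + 2 * c ^ 2 - 2 * c - 2 * s * t = (s - t) ^ 2 + (1 - 2 * c) ^ 2 := by
    linear_combination -hsc - ht
  rw [div_le_iff₀ (by positivity), hsq]
  linarith [add_le_sqrt_two_mul_sqrt_sq_add_sq (s - t) (1 - 2 * c)]

noncomputable def perimeter (c s : ℝ) : ℝ :=
  (2 + c - c ^ 2) / s + √(2 * c - c ^ 2) + √(2 + 2 * c ^ 2 - 2 * c - 2 * s * √(2 * c - c ^ 2))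

theorem two_add_sqrt_two_lt_perimeter {c s : ℝ} (hc₀ : 0 < c) (hc : c ≤ 1 / 2) (hs : 0 < s)
    (hsc : s ^ 2 + c ^ 2 = 1) : 2 + √2 < perimeter c s := by
  refine (two_add_sqrt_two_lt_minorant hc₀ hc hs hsc).trans_le ?_
  unfold perimeter
  gcongr
  exact div_sqrt_two_le_sqrt hsc (Real.sq_sqrt (by nlinarith))

theorem perimeter_zero_one : perimeter 0 1 = 2 + √2 := by
  norm_num [perimeter]

theorem cos_mem_Ioc_of_mem_Ico {α : ℝ} (hα : α ∈ Set.Ico (π / 3) (π / 2)) :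
    Real.cos α ∈ Set.Ioc 0 (1 / 2) := by
  refine ⟨Real.cos_pos_of_mem_Ioo ⟨by linarith [hα.1, Real.pi_pos], hα.2⟩, ?_⟩
  rw [← Real.cos_pi_div_three]
  exact Real.cos_le_cos_of_nonneg_of_le_pi (by positivity) (by linarith [hα.2, Real.pi_pos]) hα.1

theorem case31a_perimeter_function_min
    (g : ℝ → ℝ)
    (hg : ∀ α, g α =
      (2 + Real.cos α - (Real.cos α) ^ 2) / Real.sin α
      + Real.sqrt (2 * Real.cos α - (Real.cos α) ^ 2)
      + Real.sqrt (2 + 2 * (Real.cos α) ^ 2 - 2 * Real.cos α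
          - 2 * Real.sin α * Real.sqrt (2 * Real.cos α - (Real.cos α) ^ 2))) :
    (∀ α ∈ Set.Icc (π / 3) (π / 2), 2 + Real.sqrt 2 ≤ g α) ∧
    (∀ α ∈ Set.Icc (π / 3) (π / 2), g α = 2 + Real.sqrt 2 ↔ α = π / 2) := by
  have hg_perimeter (α : ℝ) : g α = perimeter (Real.cos α) (Real.sin α) := hg α
  have h_end : g (π / 2) = 2 + √2 := by
    rw [hg_perimeter, Real.cos_pi_div_two, Real.sin_pi_div_two, perimeter_zero_one]
  have h_lt : ∀ α ∈ Set.Icc (π / 3) (π / 2), α ≠ π / 2 → 2 + √2 < g α := by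
    intro α hα hne
    obtain ⟨hc₀, hc⟩ := cos_mem_Ioc_of_mem_Ico ⟨hα.1, hα.2.lt_of_ne hne⟩
    have hs : 0 < Real.sin α :=
      Real.sin_pos_of_pos_of_lt_pi (by linarith [hα.1, Real.pi_pos]) (by linarith [hα.2, Real.pi_pos])
    rw [hg_perimeter]
    exact two_add_sqrt_two_lt_perimeter hc₀ hc hs (Real.sin_sq_add_cos_sq α)
  refine ⟨fun α hα => ?_, fun α hα => ⟨fun h => ?_, ?_⟩⟩
  · rcases eq_or_ne α (π / 2) with rfl | hne
    · exact h_end.ge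
    · exact (h_lt α hα hne).le
  · by_contra hne
    exact (h_lt α hα hne).ne' h
  · rintro rfl
    exact h_end
end

section
/- The function f(α) = 2/sin α + 2·cot α − 2·cot(3α/2) attains its minimal value on the interval (π/3, π/2) exactly at α₀ = 2·arccos((1/2)·√(1+√3)), and this minimal value equals (4/3)·√(3 + 2√3). -/
/-!
With `θ = α / 2` and `c = cos θ`, the function is `2 cot θ - 2 cot 3θ = 4c / sin 3θ`, and
`sin² 3θ = (1 - c²)(4c² - 1)²`. For `M = (4/3)√(3 + 2√3)` this gives the identity
`(4c)² - M² sin² 3θ = (256/9)(3 + 2√3)(c² - (1 + √3)/4)²(c² - (2 - √3)/2)`,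
so on the interval, where `c² > 1/2`, the function is at least `M`, with equality exactly
when `c² = (1 + √3)/4`.
-/

open Real Set

lemma sin_three_mul_eq_sin_mul (θ : ℝ) : sin (3 * θ) = sin θ * (4 * cos θ ^ 2 - 1) := by
  rw [sin_three_mul]
  linear_combination (-4 * sin θ) * sin_sq_add_cos_sq θ

lemma one_add_cos_two_mul_div_sin_two_mul (θ : ℝ) :
    (1 + cos (2 * θ)) / sin (2 * θ) = cos θ / sin θ := by
  rw [cos_two_mul, sin_two_mul]
  rcases eq_or_ne (cos θ) 0 with hc | hc
  · simp [hc]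
  rcases eq_or_ne (sin θ) 0 with hs | hs
  · simp [hs]
  field_simp
  ring

lemma cos_div_sin_sub_cos_three_mul_div_sin_three_mul {θ : ℝ} (h : sin (3 * θ) ≠ 0) :
    cos θ / sin θ - cos (3 * θ) / sin (3 * θ) = 2 * cos θ / sin (3 * θ) := by
  have hs : sin θ ≠ 0 := fun hs ↦ h (by rw [sin_three_mul_eq_sin_mul, hs, zero_mul])
  have hsub : sin (3 * θ - θ) = 2 * sin θ * cos θ := by
    rw [show 3 * θ - θ = 2 * θ by ring, sin_two_mul]
  rw [sin_sub] at hsub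
  rw [div_sub_div _ _ hs h, div_eq_div_iff (mul_ne_zero hs h) h]
  linear_combination sin (3 * θ) * hsub

noncomputable def kitePerimeter (α : ℝ) : ℝ :=
  2 / sin α + 2 * cos α / sin α - 2 * cos (3 * α / 2) / sin (3 * α / 2)

lemma kitePerimeter_eq {α : ℝ} (h : sin (3 * (α / 2)) ≠ 0) :
    kitePerimeter α = 4 * cos (α / 2) / sin (3 * (α / 2)) := by
  have hcot := one_add_cos_two_mul_div_sin_two_mul (α / 2)
  rw [mul_div_cancel₀ α two_ne_zero] at hcot
  calc kitePerimeter α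
      = 2 * ((1 + cos α) / sin α) - 2 * (cos (3 * (α / 2)) / sin (3 * (α / 2))) := by
        rw [kitePerimeter, mul_div_assoc 3 α 2]; ring
    _ = 2 * (cos (α / 2) / sin (α / 2) - cos (3 * (α / 2)) / sin (3 * (α / 2))) := by
        rw [hcot]; ring
    _ = 4 * cos (α / 2) / sin (3 * (α / 2)) := by
        rw [cos_div_sin_sub_cos_three_mul_div_sin_three_mul h]; ring

lemma sq_four_mul_cos_sub_sq_mul_sin_three_mul (θ : ℝ) :
    (4 * cos θ) ^ 2 - (4 / 3 * √(3 + 2 * √3) * sin (3 * θ)) ^ 2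
      = 256 / 9 * (3 + 2 * √3) * ((cos θ ^ 2 - (1 + √3) / 4) ^ 2 * (cos θ ^ 2 - (2 - √3) / 2)) := by
  have hw : √3 ^ 2 = 3 := sq_sqrt (by norm_num)
  rw [mul_pow, mul_pow, mul_pow, sq_sqrt (by positivity), sin_three_mul_eq_sin_mul, mul_pow, sin_sq]
  linear_combination 16 / 9 * (-√3 ^ 2 - 3 / 2 * √3 + 6 * cos θ ^ 2 * √3 - 3 * cos θ ^ 2) * hw

section
variable {θ : ℝ} (hc : 0 ≤ cos θ) (hs : 0 < sin (3 * θ))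
include hc hs

lemma le_four_mul_cos_div_sin_three_mul (hu : (2 - √3) / 2 ≤ cos θ ^ 2) :
    4 / 3 * √(3 + 2 * √3) ≤ 4 * cos θ / sin (3 * θ) := by
  have hsq : (4 / 3 * √(3 + 2 * √3) * sin (3 * θ)) ^ 2 ≤ (4 * cos θ) ^ 2 := by
    rw [← sub_nonneg, sq_four_mul_cos_sub_sq_mul_sin_three_mul]
    have := sub_nonneg.2 hu
    positivity
  rw [le_div_iff₀ hs]
  exact (pow_le_pow_iff_left₀ (by positivity) (by positivity) two_ne_zero).1 hsq

lemma four_mul_cos_div_sin_three_mul_eq_iff (hu : (2 - √3) / 2 < cos θ ^ 2) :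
    4 * cos θ / sin (3 * θ) = 4 / 3 * √(3 + 2 * √3) ↔ cos θ ^ 2 = (1 + √3) / 4 := by
  have h3 : 0 < 3 + 2 * √3 := by positivity
  rw [div_eq_iff hs.ne', ← sq_eq_sq₀ (by positivity) (by positivity), ← sub_eq_zero,
    sq_four_mul_cos_sub_sq_mul_sin_three_mul]
  simp [h3.ne', (sub_pos.2 hu).ne', sub_eq_zero]

end

lemma one_lt_sqrt_three : 1 < √3 := lt_sqrt_of_sq_lt (by norm_num)

lemma sqrt_three_lt_two : √3 < 2 := (sqrt_lt' two_pos).2 (by norm_num)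

lemma half_angle_bounds_of_mem_Ioo {α : ℝ} (hα : α ∈ Ioo (π / 3) (π / 2)) :
    0 ≤ cos (α / 2) ∧ 0 < sin (3 * (α / 2)) ∧ (2 - √3) / 2 < cos (α / 2) ^ 2 := by
  obtain ⟨h₁, h₂⟩ := hα
  have hcos : √2 / 2 < cos (α / 2) := by
    rw [← cos_pi_div_four]
    exact cos_lt_cos_of_nonneg_of_le_pi (by linarith [pi_pos]) (by linarith [pi_pos]) (by linarith)
  have hsq : 1 / 2 < cos (α / 2) ^ 2 := by
    have h := pow_lt_pow_left₀ hcos (by positivity) two_ne_zero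
    rw [div_pow, sq_sqrt zero_le_two] at h
    linarith
  refine ⟨(lt_trans (by positivity) hcos).le,
    sin_pos_of_pos_of_lt_pi (by linarith [pi_pos]) (by linarith), ?_⟩
  linarith [one_lt_sqrt_three]

lemma le_kitePerimeter {α : ℝ} (hα : α ∈ Ioo (π / 3) (π / 2)) :
    4 / 3 * √(3 + 2 * √3) ≤ kitePerimeter α := by
  obtain ⟨hc, hs, hu⟩ := half_angle_bounds_of_mem_Ioo hα
  rw [kitePerimeter_eq hs.ne']
  exact le_four_mul_cos_div_sin_three_mul hc hs hu.le

lemma kitePerimeter_eq_iff {α : ℝ} (hα : α ∈ Ioo (π / 3) (π / 2)) :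
    kitePerimeter α = 4 / 3 * √(3 + 2 * √3) ↔ cos (α / 2) ^ 2 = (1 + √3) / 4 := by
  obtain ⟨hc, hs, hu⟩ := half_angle_bounds_of_mem_Ioo hα
  rw [kitePerimeter_eq hs.ne']
  exact four_mul_cos_div_sin_three_mul_eq_iff hc hs hu

lemma injOn_cos_sq : InjOn (fun x ↦ cos x ^ 2) (Icc 0 (π / 2)) := by
  intro x hx y hy h
  have hxπ : x ∈ Icc 0 π := ⟨hx.1, hx.2.trans (by linarith [pi_pos])⟩
  have hyπ : y ∈ Icc 0 π := ⟨hy.1, hy.2.trans (by linarith [pi_pos])⟩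
  refine injOn_cos hxπ hyπ ((sq_eq_sq₀ ?_ ?_).1 h)
  · exact cos_nonneg_of_mem_Icc ⟨by linarith [pi_pos, hx.1], hx.2⟩
  · exact cos_nonneg_of_mem_Icc ⟨by linarith [pi_pos, hy.1], hy.2⟩

lemma sqrt_one_add_sqrt_three_div_two_mem_Ioo :
    √(1 + √3) / 2 ∈ Ioo (√2 / 2) (√3 / 2) := by
  constructor <;> gcongr <;> linarith [one_lt_sqrt_three, sqrt_three_lt_two]

lemma cos_sq_arccos_sqrt_one_add_sqrt_three_div_two :
    cos (arccos (√(1 + √3) / 2)) ^ 2 = (1 + √3) / 4 := by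
  obtain ⟨hlo, hhi⟩ := sqrt_one_add_sqrt_three_div_two_mem_Ioo
  rw [cos_arccos (by linarith [sqrt_nonneg 2]) (by linarith [sqrt_three_lt_two]), div_pow,
    sq_sqrt (by positivity)]
  norm_num

lemma arccos_sqrt_one_add_sqrt_three_div_two_mem_Ioo :
    arccos (√(1 + √3) / 2) ∈ Ioo (π / 6) (π / 4) := by
  obtain ⟨hlo, hhi⟩ := sqrt_one_add_sqrt_three_div_two_mem_Ioo
  have h6 : arccos (√3 / 2) = π / 6 := by
    rw [← cos_pi_div_six, arccos_cos (by positivity) (by linarith [pi_pos])]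
  have h4 : arccos (√2 / 2) = π / 4 := by
    rw [← cos_pi_div_four, arccos_cos (by positivity) (by linarith [pi_pos])]
  have hsqrt2 : -1 ≤ √2 / 2 := by linarith [sqrt_nonneg 2]
  have hsqrt3 : √3 / 2 ≤ 1 := by linarith [sqrt_three_lt_two]
  rw [← h6, ← h4]
  exact ⟨strictAntiOn_arccos ⟨by linarith, by linarith⟩ ⟨by linarith, hsqrt3⟩ hhi,
    strictAntiOn_arccos ⟨hsqrt2, by linarith⟩ ⟨by linarith, by linarith⟩ hlo⟩

theorem kite_perimeter_function_min
    (f : ℝ → ℝ)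
    (hf : ∀ α, f α = 2 / Real.sin α + 2 * Real.cos α / Real.sin α
      - 2 * Real.cos (3 * α / 2) / Real.sin (3 * α / 2))
    (α₀ : ℝ) (hα₀ : α₀ = 2 * Real.arccos (Real.sqrt (1 + Real.sqrt 3) / 2)) :
    α₀ ∈ Set.Ioo (π / 3) (π / 2) ∧
    f α₀ = (4 / 3) * Real.sqrt (3 + 2 * Real.sqrt 3) ∧
    (∀ α ∈ Set.Ioo (π / 3) (π / 2), f α₀ ≤ f α) ∧
    (∀ α ∈ Set.Ioo (π / 3) (π / 2), f α = f α₀ → α = α₀) := by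
  obtain rfl : f = kitePerimeter := funext hf
  have hβ := arccos_sqrt_one_add_sqrt_three_div_two_mem_Ioo
  have hhalf : α₀ / 2 = arccos (√(1 + √3) / 2) := by rw [hα₀]; ring
  have hcos₀ : cos (α₀ / 2) ^ 2 = (1 + √3) / 4 :=
    hhalf ▸ cos_sq_arccos_sqrt_one_add_sqrt_three_div_two
  have hmem : α₀ ∈ Ioo (π / 3) (π / 2) := ⟨by linarith [hβ.1], by linarith [hβ.2]⟩
  have hval := (kitePerimeter_eq_iff hmem).2 hcos₀
  refine ⟨hmem, hval, fun α hα ↦ hval ▸ le_kitePerimeter hα, fun α hα h ↦ ?_⟩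
  have hcos : cos (α / 2) ^ 2 = cos (α₀ / 2) ^ 2 := by
    rw [(kitePerimeter_eq_iff hα).1 (h.trans hval), hcos₀]
  have := injOn_cos_sq ⟨by linarith [hα.1, pi_pos], by linarith [hα.2, pi_pos]⟩
    ⟨by linarith [hmem.1, pi_pos], by linarith [hmem.2, pi_pos]⟩ hcos
  linarith
end

section
/- Let ABCD be the kite in ℝ² with interior angles ∠CDA = ∠DAB = ∠ABC = α for some α ∈ (π/3, π/2), where the sides satisfy d(A,B) = d(A,D) = 1/sin α and d(B,C) = d(C,D) = −cot(3α/2) + cot α, so that the perimeter of ABCD equals 2/sin α + 2 cot α − 2 cot(3α/2). Then the perimeter of every such kite is at least (4/3)·√(3 + 2√3), with equality if and only if cos²(α/2) = (1+√3)/4. -/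
open Real

set_option maxHeartbeats 1000000 in
theorem kite_perimeter_lower_bound
    (P : ℝ → ℝ)
    (hP : ∀ α, P α = 2 / Real.sin α + 2 * Real.cos α / Real.sin α
      - 2 * Real.cos (3 * α / 2) / Real.sin (3 * α / 2)) :
    ∀ α ∈ Set.Ioo (π / 3) (π / 2),
      (4 / 3) * Real.sqrt (3 + 2 * Real.sqrt 3) ≤ P α ∧
      (P α = (4 / 3) * Real.sqrt (3 + 2 * Real.sqrt 3) ↔
        (Real.cos (α / 2)) ^ 2 = (1 + Real.sqrt 3) / 4) := by
  intro α hα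
  obtain ⟨h1, h2⟩ := hα
  have hpi : (0:ℝ) < π := pi_pos
  set t := α / 2 with ht
  have hα2 : α = 2 * t := by rw [ht]; ring
  have ht1 : π / 6 < t := by rw [ht]; linarith
  have ht2 : t < π / 4 := by rw [ht]; linarith
  have hs : 0 < Real.sin t := sin_pos_of_pos_of_lt_pi (by linarith) (by linarith)
  have hc : 0 < Real.cos t := cos_pos_of_mem_Ioo ⟨by linarith, by linarith⟩
  set q := Real.sqrt 3 with hqdef
  have hq0 : 0 < q := Real.sqrt_pos.mpr (by norm_num)
  have hq3 : q ^ 2 = 3 := Real.sq_sqrt (by norm_num)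
  have hq1 : 1 < q := by nlinarith
  have hq2 : q < 2 := by nlinarith
  set c := Real.cos t
  set s := Real.sin t
  have hs2 : s ^ 2 = 1 - c ^ 2 := by
    have := sin_sq_add_cos_sq t; linarith
  -- bounds on x = c^2
  have hx1 : 1 / 2 < c ^ 2 := by
    have h4 : Real.cos (π / 4) < c :=
      Real.cos_lt_cos_of_nonneg_of_le_pi (by linarith) (by linarith) ht2
    rw [Real.cos_pi_div_four] at h4
    have h2' : Real.sqrt 2 ^ 2 = 2 := Real.sq_sqrt (by norm_num)
    have h2p : 0 < Real.sqrt 2 := Real.sqrt_pos.mpr (by norm_num)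
    nlinarith
  have hx2 : c ^ 2 < 3 / 4 := by
    have h6 : c < Real.cos (π / 6) :=
      Real.cos_lt_cos_of_nonneg_of_le_pi (by linarith) (by linarith) ht1
    rw [Real.cos_pi_div_six] at h6
    nlinarith
  have h4c : 0 < 4 * c ^ 2 - 1 := by nlinarith
  have hD : 0 < s * (4 * c ^ 2 - 1) := mul_pos hs h4c
  -- rewrite P
  have hsin3 : Real.sin (3 * α / 2) = s * (4 * c ^ 2 - 1) := by
    have h3t : 3 * α / 2 = 3 * t := by rw [hα2]; ring
    rw [h3t, Real.sin_three_mul]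
    linear_combination (-4 * s) * (sin_sq_add_cos_sq t)
  have hcos3 : Real.cos (3 * α / 2) = 4 * c ^ 3 - 3 * c := by
    have h3t : 3 * α / 2 = 3 * t := by rw [hα2]; ring
    rw [h3t, Real.cos_three_mul]
  have hsinα : Real.sin α = 2 * s * c := by
    rw [hα2, Real.sin_two_mul]
  have hcosα : Real.cos α = 2 * c ^ 2 - 1 := by
    rw [hα2, Real.cos_two_mul]
  have key : P α = 4 * c / (s * (4 * c ^ 2 - 1)) := by
    rw [hP, hsin3, hcos3, hsinα, hcosα]
    have e1 : 2 * s * c ≠ 0 := by positivity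
    have e2 : s * (4 * c ^ 2 - 1) ≠ 0 := ne_of_gt hD
    rw [div_add_div _ _ e1 e1, div_sub_div _ _ (mul_ne_zero e1 e1) e2,
      div_eq_div_iff (mul_ne_zero (mul_ne_zero e1 e1) e2) e2]
    ring
  -- square root facts
  have hKpos : (0:ℝ) < 3 + 2 * q := by linarith
  have hB2 : ((4:ℝ) / 3 * Real.sqrt (3 + 2 * q)) ^ 2 = 16 / 9 * (3 + 2 * q) := by
    rw [mul_pow, Real.sq_sqrt (le_of_lt hKpos)]
    ring
  have hBpos : 0 < (4:ℝ) / 3 * Real.sqrt (3 + 2 * q) :=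
    mul_pos (by norm_num) (Real.sqrt_pos.mpr hKpos)
  set B := (4:ℝ) / 3 * Real.sqrt (3 + 2 * q) with hBdef
  -- the key polynomial identity
  have hid : ∀ x : ℝ, 16 * x - 16 / 9 * (3 + 2 * q) * (1 - x) * (4 * x - 1) ^ 2
      = 256 / 9 * (3 + 2 * q) * (x - (1 + q) / 4) ^ 2 * (x - (2 - q) / 2) := by
    intro x
    linear_combination (-16 / 9 * q ^ 2 - 8 / 3 * q + 32 / 3 * x * q - 16 / 3 * x) * hq3
  have hfacpos : 0 ≤ 256 / 9 * (3 + 2 * q) * (c ^ 2 - (1 + q) / 4) ^ 2 * (c ^ 2 - (2 - q) / 2) := by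
    apply mul_nonneg
    · positivity
    · nlinarith
  have hmain : 16 / 9 * (3 + 2 * q) * (1 - c ^ 2) * (4 * c ^ 2 - 1) ^ 2 ≤ 16 * c ^ 2 := by
    have := hid (c ^ 2); linarith
  -- main inequality: B * D ≤ 4c
  have hBD : B * (s * (4 * c ^ 2 - 1)) ≤ 4 * c := by
    have hsqle : (B * (s * (4 * c ^ 2 - 1))) ^ 2 ≤ (4 * c) ^ 2 := by
      have he : (B * (s * (4 * c ^ 2 - 1))) ^ 2
          = 16 / 9 * (3 + 2 * q) * (1 - c ^ 2) * (4 * c ^ 2 - 1) ^ 2 := by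
        rw [mul_pow, hB2, mul_pow, hs2]; ring
      rw [he]
      nlinarith [hmain]
    nlinarith [hsqle, mul_pos hBpos hD, hc]
  have hle : B ≤ P α := by
    rw [key, le_div_iff₀ hD]; exact hBD
  refine ⟨hle, ?_, ?_⟩
  · -- equality → x = x0
    intro heq
    rw [key] at heq
    have h4c' : 4 * c = B * (s * (4 * c ^ 2 - 1)) := (div_eq_iff (ne_of_gt hD)).mp heq
    have hsq : 16 * c ^ 2 = 16 / 9 * (3 + 2 * q) * (1 - c ^ 2) * (4 * c ^ 2 - 1) ^ 2 := by
      have h2 : 16 * c ^ 2 = B ^ 2 * (s ^ 2 * (4 * c ^ 2 - 1) ^ 2) := by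
        linear_combination (4 * c + B * (s * (4 * c ^ 2 - 1))) * h4c'
      rw [hB2, hs2] at h2
      linear_combination h2
    have hzero : 256 / 9 * (3 + 2 * q) * (c ^ 2 - (1 + q) / 4) ^ 2 * (c ^ 2 - (2 - q) / 2) = 0 := by
      have := hid (c ^ 2); linarith
    have hpos2 : 0 < c ^ 2 - (2 - q) / 2 := by nlinarith
    have hsqz : (c ^ 2 - (1 + q) / 4) ^ 2 = 0 := by
      rcases mul_eq_zero.mp hzero with h | h
      · rcases mul_eq_zero.mp h with h' | h'
        · exfalso; nlinarith
        · exact h'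
      · exfalso; linarith
    have hfin : c ^ 2 - (1 + q) / 4 = 0 := by
      exact (pow_eq_zero_iff (by norm_num : (2:ℕ) ≠ 0)).mp hsqz
    linarith
  · -- x = x0 → equality
    intro hx
    rw [key]
    have h4x : 4 * c ^ 2 - 1 = q := by rw [hx]; ring
    have hP2 : (4 * c / (s * (4 * c ^ 2 - 1))) ^ 2 = B ^ 2 := by
      rw [hB2, div_pow]
      rw [div_eq_iff (by positivity)]
      have hD2 : (s * (4 * c ^ 2 - 1)) ^ 2 = (1 - (1 + q) / 4) * 3 := by
        rw [mul_pow, h4x, hs2, hx, hq3]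
      rw [hD2, mul_pow, hx]
      linear_combination (8 / 3) * hq3
    have hPpos : 0 < 4 * c / (s * (4 * c ^ 2 - 1)) := by positivity
    have hz : (4 * c / (s * (4 * c ^ 2 - 1)) - B) * (4 * c / (s * (4 * c ^ 2 - 1)) + B) = 0 := by
      linear_combination hP2
    rcases mul_eq_zero.mp hz with h | h
    · linarith
    · exfalso; linarith
end
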